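/- For all n ≥ 0 and k ≥ 1, the k-colored Motzkin number satisfies m_{n,k} = Σ_{j=0}^{⌊n/2⌋} C_j · binomial(n, 2j) · k^{n−2j}, where C_j is the j-th Catalan number. -/

import Mathlib

open Finset

/-- The `k`-colored Motzkin numbers. -/
def coloredMotzkin (k : ℕ) : ℕ → ℕ
  | 0 => 1
  | n + 1 => k * coloredMotzkin k n + ∑ i : Fin n, coloredMotzkin k i * coloredMotzkin k (n - 1 - i)
decreasing_by
  · exact Nat.lt_succ_self n
  · exact Nat.lt_succ_of_lt i.is_lt
  · have := i.is_lt; omega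

/-! Let `M n` be the right-hand side summed up to `j = n` (the extra terms vanish). It suffices
to show that `M` satisfies the defining recurrence. Pascal's rule splits `M (n + 1)` into
`k * M n` plus `∑ₘ C_{m+1} (n choose 2m+1) k^(n-1-2m)`. The convolution `∑ M i * M (n - 1 - i)`
gives the same sum: first by the identity `∑_{i+j=N} (i choose r)(j choose s) = (N+1 choose r+s+1)`,
then by Segner's recurrence `C_{m+1} = ∑_{a+b=m} C_a C_b`. -/

theorem Nat.sum_antidiagonal_choose_mul_choose (r s N : ℕ) :
    ∑ ij ∈ antidiagonal N, ij.1.choose r * ij.2.choose s = (N + 1).choose (r + s + 1) := by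
  induction N generalizing r with
  | zero => cases r <;> cases s <;> simp [Nat.choose_eq_zero_of_lt]
  | succ N ih =>
    rw [Nat.sum_antidiagonal_succ, Nat.choose_succ_succ (N + 1)]
    cases r with
    | zero => simpa [add_comm] using ih 0
    | succ r =>
      simp only [Nat.choose_succ_succ' _ r, add_mul, sum_add_distrib, ih, Nat.choose_zero_succ,
        zero_mul, zero_add]
      rw [add_right_comm r 1 s]

theorem sum_range_catalan_mul_catalan {R : Type*} [Semiring R] {N : ℕ} (g : ℕ → R)
    (hg : ∀ m, N ≤ m → g m = 0) :
    ∑ a ∈ range N, ∑ b ∈ range N, (catalan a * catalan b : R) * g (a + b)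
      = ∑ m ∈ range N, (catalan (m + 1) : R) * g m := by
  have hcut (a : ℕ) : ∑ b ∈ range N, (catalan a * catalan b : R) * g (a + b)
      = ∑ b ∈ range (N - a), (catalan a * catalan b : R) * g (a + b) := by
    refine (sum_subset (range_subset_range.2 (Nat.sub_le N a)) fun b _ hb => ?_).symm
    rw [hg _ (by simp at hb; omega), mul_zero]
  simp only [hcut, ← sum_range_diag_flip N fun a b => (catalan a * catalan b : R) * g (a + b)]
  refine sum_congr rfl fun m _ => ?_
  rw [catalan_succ, Fin.sum_univ_eq_sum_range (fun i => catalan i * catalan (m - i)) (m + 1)]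
  push_cast
  rw [sum_mul]
  refine sum_congr rfl fun i hi => ?_
  rw [Nat.add_sub_cancel' (by simp at hi; omega)]

def coloredMotzkinSum (k n : ℕ) : ℕ :=
  ∑ j ∈ range (n + 1), catalan j * n.choose (2 * j) * k ^ (n - 2 * j)

theorem coloredMotzkinSum_eq_sum_range (k n : ℕ) {N : ℕ} (hN : n / 2 < N) :
    coloredMotzkinSum k n = ∑ j ∈ range N, catalan j * n.choose (2 * j) * k ^ (n - 2 * j) := by
  have htrunc {M : ℕ} (hM : n / 2 < M) :
      ∑ j ∈ range M, catalan j * n.choose (2 * j) * k ^ (n - 2 * j)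
        = ∑ j ∈ range (n / 2 + 1), catalan j * n.choose (2 * j) * k ^ (n - 2 * j) := by
    refine (sum_subset (range_subset_range.2 hM) fun j _ hj => ?_).symm
    rw [Nat.choose_eq_zero_of_lt (by simp at hj; omega), mul_zero, zero_mul]
  rw [coloredMotzkinSum, htrunc (by omega), htrunc hN]

theorem choose_succ_succ_mul_pow (k n i : ℕ) :
    (n + 1).choose (i + 1) * k ^ (n - i)
      = k * (n.choose (i + 1) * k ^ (n - (i + 1))) + n.choose i * k ^ (n - i) := by
  rw [Nat.choose_succ_succ', add_mul, add_comm]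
  congr 1
  rcases lt_or_ge i n with hi | hi
  · rw [show n - i = n - (i + 1) + 1 by omega, pow_succ]; ring
  · rw [Nat.choose_eq_zero_of_lt (by omega)]; simp

theorem coloredMotzkinSum_succ_eq (k n : ℕ) :
    coloredMotzkinSum k (n + 1) = k * coloredMotzkinSum k n
      + ∑ m ∈ range (n + 1), catalan (m + 1) * (n.choose (2 * m + 1) * k ^ (n - (2 * m + 1))) := by
  rw [coloredMotzkinSum_eq_sum_range k n (N := n + 2) (by omega), coloredMotzkinSum,
    sum_range_succ', sum_range_succ' _ (n + 1), mul_add, mul_sum, add_right_comm, ← sum_add_distrib]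
  congr 1
  · refine sum_congr rfl fun m _ => ?_
    rw [show 2 * (m + 1) = 2 * m + 1 + 1 by ring, Nat.add_sub_add_right, mul_assoc,
      choose_succ_succ_mul_pow]
    ring
  · simp [pow_succ']

theorem sum_antidiagonal_coloredMotzkinSum_mul (k N : ℕ) :
    ∑ ij ∈ antidiagonal N, coloredMotzkinSum k ij.1 * coloredMotzkinSum k ij.2
      = ∑ m ∈ range (N + 2), catalan (m + 1) * ((N + 1).choose (2 * m + 1) * k ^ (N - 2 * m)) := by
  have hpow {i j a b : ℕ} (hij : i + j = N) :
      catalan a * i.choose (2 * a) * k ^ (i - 2 * a)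
          * (catalan b * j.choose (2 * b) * k ^ (j - 2 * b))
        = catalan a * catalan b
          * (i.choose (2 * a) * j.choose (2 * b) * k ^ (N - 2 * (a + b))) := by
    -- the truncated exponents add up correctly unless one of the binomials vanishes
    rcases lt_or_ge i (2 * a) with ha | ha
    · simp [Nat.choose_eq_zero_of_lt ha]
    rcases lt_or_ge j (2 * b) with hb | hb
    · simp [Nat.choose_eq_zero_of_lt hb]
    rw [show N - 2 * (a + b) = (i - 2 * a) + (j - 2 * b) by omega, pow_add]
    ring
  calc ∑ ij ∈ antidiagonal N, coloredMotzkinSum k ij.1 * coloredMotzkinSum k ij.2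
      = ∑ ij ∈ antidiagonal N, ∑ a ∈ range (N + 2), ∑ b ∈ range (N + 2),
          catalan a * ij.1.choose (2 * a) * k ^ (ij.1 - 2 * a)
            * (catalan b * ij.2.choose (2 * b) * k ^ (ij.2 - 2 * b)) := by
        refine sum_congr rfl fun ij hij => ?_
        rw [HasAntidiagonal.mem_antidiagonal] at hij
        rw [coloredMotzkinSum_eq_sum_range k ij.1 (N := N + 2) (by omega),
          coloredMotzkinSum_eq_sum_range k ij.2 (N := N + 2) (by omega), sum_mul_sum]
    _ = ∑ a ∈ range (N + 2), ∑ b ∈ range (N + 2),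
          catalan a * catalan b * ((N + 1).choose (2 * (a + b) + 1) * k ^ (N - 2 * (a + b))) := by
        rw [sum_comm]
        refine sum_congr rfl fun a _ => ?_
        rw [sum_comm]
        refine sum_congr rfl fun b _ => ?_
        rw [sum_congr rfl fun ij hij => hpow (HasAntidiagonal.mem_antidiagonal.1 hij), ← mul_sum,
          ← sum_mul, Nat.sum_antidiagonal_choose_mul_choose, mul_add]
    _ = _ := by
        simpa only [Nat.cast_id] using sum_range_catalan_mul_catalan
          (fun m => (N + 1).choose (2 * m + 1) * k ^ (N - 2 * m)) fun m hm => by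
            rw [Nat.choose_eq_zero_of_lt (by omega), zero_mul]

theorem coloredMotzkinSum_succ (k n : ℕ) :
    coloredMotzkinSum k (n + 1) = k * coloredMotzkinSum k n
      + ∑ i : Fin n, coloredMotzkinSum k i * coloredMotzkinSum k (n - 1 - i) := by
  rw [coloredMotzkinSum_succ_eq]
  cases n with
  | zero => simp
  | succ N =>
    rw [Fin.sum_univ_eq_sum_range
        (fun i => coloredMotzkinSum k i * coloredMotzkinSum k (N + 1 - 1 - i)), Nat.add_sub_cancel,
      ← Nat.sum_antidiagonal_eq_sum_range_succ
        (fun i j => coloredMotzkinSum k i * coloredMotzkinSum k j),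
      sum_antidiagonal_coloredMotzkinSum_mul]
    simp only [Nat.add_sub_add_right]

theorem eq_coloredMotzkin_of_succ {k : ℕ} {f : ℕ → ℕ} (h0 : f 0 = 1)
    (hsucc : ∀ n, f (n + 1) = k * f n + ∑ i : Fin n, f i * f (n - 1 - i)) (n : ℕ) :
    f n = coloredMotzkin k n := by
  induction n using Nat.strong_induction_on with
  | _ n ih =>
    cases n with
    | zero => rw [h0, coloredMotzkin]
    | succ n =>
      rw [hsucc, coloredMotzkin, ih n n.lt_succ_self]
      congr 1
      refine Fintype.sum_congr _ _ fun i => ?_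
      rw [ih i (by omega), ih (n - 1 - i) (by omega)]

theorem coloredMotzkin_eq_sum_general (n k : ℕ) :
    coloredMotzkin k n =
      ∑ j ∈ Finset.range (n / 2 + 1), catalan j * n.choose (2 * j) * k ^ (n - 2 * j) := by
  rw [← eq_coloredMotzkin_of_succ (by simp [coloredMotzkinSum]) (coloredMotzkinSum_succ k) n]
  exact coloredMotzkinSum_eq_sum_range k n (Nat.lt_succ_self _)

/-- For all `n ≥ 0` and `k ≥ 1`,
`m_{n,k} = ∑_{j=0}^{⌊n/2⌋} C_j · (n choose 2j) · k^(n-2j)`. -/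
theorem coloredMotzkin_eq_sum (n k : ℕ) (hk : 1 ≤ k) :
    coloredMotzkin k n =
      ∑ j ∈ Finset.range (n / 2 + 1), catalan j * n.choose (2 * j) * k ^ (n - 2 * j) :=
  coloredMotzkin_eq_sum_general n k
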